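/- If eᵢ(n) ∈ span(X), then R(X'X)⁻¹xᵢ·' = 0 if and only if eᵢ(n) ∈ 𝔐₀^lin = {Xβ : Rβ = 0}. -/
import Mathlib


open Matrix

/-- `R (XᵀX)⁻¹ Xᵀ`, the 1×n row vector whose i-th entry is `R(X'X)⁻¹xᵢ·'`. -/
noncomputable def cRow {n k : ℕ} (X : Matrix (Fin n) (Fin k) ℝ)
    (R : Matrix (Fin 1) (Fin k) ℝ) : Matrix (Fin 1) (Fin n) ℝ :=
  R * (Xᵀ * X)⁻¹ * Xᵀ

/-- OLS estimator `β̂(y) = (X'X)⁻¹X'y`. -/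
noncomputable def betaHat {n k : ℕ} (X : Matrix (Fin n) (Fin k) ℝ)
    (y : Fin n → ℝ) : Fin k → ℝ :=
  ((Xᵀ * X)⁻¹ * Xᵀ).mulVec y

/-- Residual vector `û(y) = y - Xβ̂(y)`. -/
noncomputable def uHat {n k : ℕ} (X : Matrix (Fin n) (Fin k) ℝ)
    (y : Fin n → ℝ) : Fin n → ℝ :=
  y - X.mulVec (betaHat X y)

/-- `B(y) = R(X'X)⁻¹X' diag(û₁(y),…,ûₙ(y))`, viewed as a vector in ℝⁿ. -/
noncomputable def Bmap {n k : ℕ} (X : Matrix (Fin n) (Fin k) ℝ)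
    (R : Matrix (Fin 1) (Fin k) ℝ) (y : Fin n → ℝ) : Fin n → ℝ :=
  fun i => cRow X R 0 i * uHat X y i

/-- The set `𝖡 = {y : B(y) = 0}`. -/
noncomputable def Bset {n k : ℕ} (X : Matrix (Fin n) (Fin k) ℝ)
    (R : Matrix (Fin 1) (Fin k) ℝ) : Set (Fin n → ℝ) :=
  {y | Bmap X R y = 0}

/-- `Ω̂_Het(y) = R(X'X)⁻¹X' diag(d₁û₁²(y),…,dₙûₙ²(y)) X(X'X)⁻¹R'`. -/
noncomputable def OmegaHat {n k : ℕ} (X : Matrix (Fin n) (Fin k) ℝ)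
    (R : Matrix (Fin 1) (Fin k) ℝ) (d : Fin n → ℝ) (y : Fin n → ℝ) : ℝ :=
  (R * (Xᵀ * X)⁻¹ * Xᵀ * Matrix.diagonal (fun i => d i * (uHat X y i) ^ 2) *
    X * (Xᵀ * X)⁻¹ * Rᵀ) 0 0

/-- Heteroskedasticity robust test statistic `T_Het`. -/
noncomputable def THet {n k : ℕ} (X : Matrix (Fin n) (Fin k) ℝ)
    (R : Matrix (Fin 1) (Fin k) ℝ) (d : Fin n → ℝ) (r : ℝ) (y : Fin n → ℝ) : ℝ :=
  if OmegaHat X R d y ≠ 0 then (R.mulVec (betaHat X y) 0 - r) ^ 2 / OmegaHat X R d y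
  else 0

/-- `𝔐₀^lin = {Xβ : Rβ = 0}`. -/
def M0lin {n k : ℕ} (X : Matrix (Fin n) (Fin k) ℝ)
    (R : Matrix (Fin 1) (Fin k) ℝ) : Set (Fin n → ℝ) :=
  {y | ∃ β : Fin k → ℝ, y = X.mulVec β ∧ R.mulVec β 0 = 0}

/-- `𝓥_# = span{eᵢ(n) : i ∈ 𝓘_#, eᵢ(n) ∈ 𝖡}`. -/
noncomputable def Vsharp {n k : ℕ} (X : Matrix (Fin n) (Fin k) ℝ)
    (R : Matrix (Fin 1) (Fin k) ℝ) : Submodule ℝ (Fin n → ℝ) :=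
  Submodule.span ℝ ((fun i => (Pi.single i 1 : Fin n → ℝ)) ''
    {i | cRow X R 0 i = 0 ∧ (Pi.single i 1 : Fin n → ℝ) ∈ Bset X R})

/-- `𝓛_# = span(𝔐₀^lin ∪ 𝓥_#)`. -/
noncomputable def Lsharp {n k : ℕ} (X : Matrix (Fin n) (Fin k) ℝ)
    (R : Matrix (Fin 1) (Fin k) ℝ) : Submodule ℝ (Fin n → ℝ) :=
  Submodule.span ℝ (M0lin X R ∪ (Vsharp X R : Set (Fin n → ℝ)))

lemma isUnit_XtX {n k : ℕ} (X : Matrix (Fin n) (Fin k) ℝ) (hX : X.rank = k) :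
    IsUnit (Xᵀ * X) := by
  rw [← Matrix.mulVec_surjective_iff_isUnit]
  have hr : (Xᵀ * X).rank = k := by rw [Matrix.rank_transpose_mul_self]; exact hX
  have : LinearMap.range (Xᵀ * X).mulVecLin = ⊤ := by
    apply Submodule.eq_top_of_finrank_eq
    rw [← Matrix.rank] at *
    simpa using hr
  intro v
  have := this ▸ Submodule.mem_top (R := ℝ) (x := v)
  obtain ⟨w, hw⟩ := this
  exact ⟨w, hw⟩

lemma cRow_eq {n k : ℕ} (X : Matrix (Fin n) (Fin k) ℝ) (hX : X.rank = k)
    (R : Matrix (Fin 1) (Fin k) ℝ) (i : Fin n) (β : Fin k → ℝ)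
    (hβ : (Pi.single i 1 : Fin n → ℝ) = X.mulVec β) :
    cRow X R 0 i = R.mulVec β 0 := by
  have hu : IsUnit (Xᵀ * X) := isUnit_XtX X hX
  have h1 : cRow X R 0 i = (cRow X R).mulVec (Pi.single i 1 : Fin n → ℝ) 0 := by
    simp [Matrix.mulVec_single]
  rw [h1, hβ, Matrix.mulVec_mulVec]
  congr 1
  rw [cRow, Matrix.mul_assoc, Matrix.mul_assoc, Matrix.nonsing_inv_mul _
    (hu.map (Matrix.detMonoidHom)), Matrix.mul_one]

theorem stmt14    {n k : ℕ} (hk : 1 ≤ k) (hkn : k < n)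
    (X : Matrix (Fin n) (Fin k) ℝ) (hX : X.rank = k)
    (R : Matrix (Fin 1) (Fin k) ℝ) (hR : R ≠ 0) :
    ∀ i : Fin n, (Pi.single i 1 : Fin n → ℝ) ∈ Set.range X.mulVec →
      (cRow X R 0 i = 0 ↔ (Pi.single i 1 : Fin n → ℝ) ∈ M0lin X R) := by
  intro i hi
  obtain ⟨β, hβ⟩ := hi
  constructor
  · intro h
    exact ⟨β, hβ.symm, by rw [← cRow_eq X hX R i β hβ.symm]; exact h⟩
  · rintro ⟨β', hβ', hRβ'⟩
    rw [cRow_eq X hX R i β' hβ', hRβ']
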